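/- arXiv:1912.03190 — 5 statements merged into one kernel-verified Lean document; each statement's English description precedes it below -/
import Mathlib

section
/- Let φ: 𝔻 → 𝔻 be analytic and locally univalent, and define A_φ(z) = ((1-|z|²)/2)·φ''(z)/φ'(z) - z̄ + (1-|z|²)·conj(φ(z))·φ'(z)/(1-|φ(z)|²). If A_φ(z) = 0 for all z in some open disk Δ ⊂ 𝔻, then φ is a conformal automorphism of 𝔻. -/
open Complex Metric Set Filter Asymptotics Topology

/-- The hyperbolic derivative `D_φ(z) = (1-|z|²) φ'(z) / (1-|φ(z)|²)`. -/
noncomputable def Dh (φ : ℂ → ℂ) (z : ℂ) : ℂ :=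
  (1 - (‖z‖ : ℂ)^2) * deriv φ z / (1 - (‖φ z‖ : ℂ)^2)

/-- The second order operator
`A_φ(z) = ((1-|z|²)/2) φ''/φ' - z̄ + (1-|z|²) conj(φ(z)) φ'(z)/(1-|φ(z)|²)`. -/
noncomputable def Ah (φ : ℂ → ℂ) (z : ℂ) : ℂ :=
  ((1 - (‖z‖ : ℂ)^2) / 2) * (deriv (deriv φ) z / deriv φ z) - (starRingEnd ℂ) z
    + (1 - (‖z‖ : ℂ)^2) * (starRingEnd ℂ) (φ z) * deriv φ z / (1 - (‖φ z‖ : ℂ)^2)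

/-- The Schwarzian derivative `S_φ = φ'''/φ' - (3/2)(φ''/φ')²`. -/
noncomputable def Sh (φ : ℂ → ℂ) (z : ℂ) : ℂ :=
  deriv (deriv (deriv φ)) z / deriv φ z - (3/2) * (deriv (deriv φ) z / deriv φ z)^2

/-- Wirtinger derivative `∂/∂z`. -/
noncomputable def wDz (f : ℂ → ℂ) (z : ℂ) : ℂ :=
  (fderiv ℝ f z 1 - Complex.I * fderiv ℝ f z Complex.I) / 2

/-- Wirtinger derivative `∂/∂z̄`. -/
noncomputable def wDzbar (f : ℂ → ℂ) (z : ℂ) : ℂ :=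
  (fderiv ℝ f z 1 + Complex.I * fderiv ℝ f z Complex.I) / 2

/-!
Since `A_φ = (1 - |z|²) ∂ log |D_φ|`, applying `∂̄` yields the identity
`(1 - |z|²) ∂̄A_φ + z A_φ = |D_φ|² - 1`. Hence if `A_φ` vanishes on a disc around `w`, then
`|D_φ(w)| = 1`: equality holds in the Schwarz–Pick inequality at `w`. Conjugating `φ` by the disc
automorphisms exchanging `w ↔ 0` and `φ(w) ↔ 0` gives a self-map `g` of the disc with `g(0) = 0`
and `|g'(0)| = |D_φ(w)| = 1`, which is a rotation by the equality case of the Schwarz lemma.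
-/

open scoped ComplexConjugate

section Moebius

noncomputable def moebius (a z : ℂ) : ℂ := (a - z) / (1 - conj a * z)

variable {a z : ℂ}

lemma one_sub_conj_mul_ne_zero (ha : ‖a‖ < 1) (hz : ‖z‖ < 1) : 1 - conj a * z ≠ 0 := by
  refine sub_ne_zero.mpr fun h => ?_
  have : ‖conj a * z‖ < 1 := by
    rw [norm_mul, RCLike.norm_conj]
    nlinarith [norm_nonneg a, norm_nonneg z]
  rw [← h, norm_one] at this
  exact this.false

lemma norm_one_sub_conj_mul_sq_sub_norm_sub_sq (a z : ℂ) :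
    ‖1 - conj a * z‖ ^ 2 - ‖a - z‖ ^ 2 = (1 - ‖a‖ ^ 2) * (1 - ‖z‖ ^ 2) := by
  simp only [Complex.sq_norm, Complex.normSq_apply, Complex.sub_re, Complex.sub_im,
    Complex.mul_re, Complex.mul_im, Complex.one_re, Complex.one_im, Complex.conj_re,
    Complex.conj_im]
  ring

lemma norm_moebius_lt_one (ha : ‖a‖ < 1) (hz : ‖z‖ < 1) : ‖moebius a z‖ < 1 := by
  have hpos : 0 < ‖1 - conj a * z‖ := norm_pos_iff.mpr (one_sub_conj_mul_ne_zero ha hz)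
  rw [moebius, norm_div, div_lt_one hpos]
  have hprod : 0 < (1 - ‖a‖ ^ 2) * (1 - ‖z‖ ^ 2) := by
    apply mul_pos <;> nlinarith [norm_nonneg a, norm_nonneg z]
  nlinarith [norm_one_sub_conj_mul_sq_sub_norm_sub_sq a z, norm_nonneg (a - z)]

lemma mapsTo_moebius (ha : ‖a‖ < 1) : MapsTo (moebius a) (ball 0 1) (ball 0 1) := fun z hz => by
  rw [mem_ball_zero_iff] at hz ⊢
  exact norm_moebius_lt_one ha hz

lemma moebius_moebius (ha : ‖a‖ < 1) (hz : ‖z‖ < 1) : moebius a (moebius a z) = z := by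
  have hz' := one_sub_conj_mul_ne_zero ha hz
  have hz'' : 1 - z * conj a ≠ 0 := by rwa [mul_comm]
  have ha' := one_sub_conj_mul_ne_zero ha ha
  have hsub : a - moebius a z = z * (1 - conj a * a) / (1 - conj a * z) := by
    rw [moebius, eq_div_iff hz']; field_simp; ring
  have hden : 1 - conj a * moebius a z = (1 - conj a * a) / (1 - conj a * z) := by
    rw [moebius, eq_div_iff hz']; field_simp; ring
  rw [moebius, hsub, hden, div_div_div_cancel_right₀ hz', mul_div_cancel_right₀ _ ha']

lemma bijOn_moebius (ha : ‖a‖ < 1) : BijOn (moebius a) (ball 0 1) (ball 0 1) :=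
  InvOn.bijOn ⟨fun _ hz => moebius_moebius ha (mem_ball_zero_iff.mp hz),
    fun _ hz => moebius_moebius ha (mem_ball_zero_iff.mp hz)⟩ (mapsTo_moebius ha) (mapsTo_moebius ha)

@[simp] lemma moebius_zero (a : ℂ) : moebius a 0 = a := by simp [moebius]

@[simp] lemma moebius_self (a : ℂ) : moebius a a = 0 := by simp [moebius]

lemma hasDerivAt_moebius (hz : 1 - conj a * z ≠ 0) :
    HasDerivAt (moebius a) ((conj a * a - 1) / (1 - conj a * z) ^ 2) z := by
  have h := ((hasDerivAt_id z).const_sub a).div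
    (((hasDerivAt_id z).const_mul (conj a)).const_sub 1) hz
  exact h.congr_deriv (by simp only [id]; ring)

end Moebius

lemma bijOn_mul_ball {c : ℂ} (hc : ‖c‖ = 1) : BijOn (· * c) (ball (0 : ℂ) 1) (ball 0 1) := by
  have hc0 : c ≠ 0 := norm_ne_zero_iff.mp (by rw [hc]; exact one_ne_zero)
  have hmaps : ∀ d : ℂ, ‖d‖ = 1 → MapsTo (· * d) (ball (0 : ℂ) 1) (ball 0 1) := fun d hd z hz => by
    simpa [hd] using hz
  exact InvOn.bijOn ⟨fun _ _ => by simp [hc0], fun _ _ => by simp [hc0]⟩ (hmaps c hc)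
    (hmaps c⁻¹ (by rw [norm_inv, hc, inv_one]))

lemma hasDerivAt_moebius_comp_comp_moebius {f : ℂ → ℂ} {w : ℂ} (hfw : ‖f w‖ < 1)
    (hf : DifferentiableAt ℂ f w) : HasDerivAt (moebius (f w) ∘ f ∘ moebius w) (Dh f w) 0 := by
  have hinner : HasDerivAt (moebius w) (conj w * w - 1) 0 := by
    simpa using hasDerivAt_moebius (a := w) (z := 0) (by simp)
  have hmid : HasDerivAt f (deriv f w) (moebius w 0) := by rw [moebius_zero]; exact hf.hasDerivAt
  have houter : HasDerivAt (moebius (f w))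
      ((conj (f w) * f w - 1) / (1 - conj (f w) * f w) ^ 2) (f (moebius w 0)) := by
    rw [moebius_zero]; exact hasDerivAt_moebius (one_sub_conj_mul_ne_zero hfw hfw)
  refine (houter.comp 0 (hmid.comp 0 hinner)).congr_deriv ?_
  have hden : 1 - conj (f w) * f w ≠ 0 := one_sub_conj_mul_ne_zero hfw hfw
  rw [Dh, ← conj_mul', ← conj_mul']
  field_simp
  ring

theorem bijOn_ball_of_norm_Dh_eq_one {f : ℂ → ℂ} {w : ℂ} (hf : DifferentiableOn ℂ f (ball 0 1))
    (hfm : MapsTo f (ball 0 1) (ball 0 1)) (hw : w ∈ ball (0 : ℂ) 1) (hD : ‖Dh f w‖ = 1) :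
    BijOn f (ball 0 1) (ball 0 1) := by
  have hw1 : ‖w‖ < 1 := mem_ball_zero_iff.mp hw
  have hfw1 : ‖f w‖ < 1 := mem_ball_zero_iff.mp (hfm hw)
  set g := moebius (f w) ∘ f ∘ moebius w
  have hg0 : g 0 = 0 := by simp [g]
  have hgm : MapsTo g (ball 0 1) (ball 0 1) :=
    (mapsTo_moebius hfw1).comp (hfm.comp (mapsTo_moebius hw1))
  have hgd : DifferentiableOn ℂ g (ball 0 1) := fun z hz => by
    have hmz := mapsTo_moebius hw1 hz
    refine DifferentiableAt.differentiableWithinAt ?_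
    refine DifferentiableAt.comp z ?_ (DifferentiableAt.comp z ?_ ?_)
    · exact (hasDerivAt_moebius (one_sub_conj_mul_ne_zero hfw1
        (mem_ball_zero_iff.mp (hfm hmz)))).differentiableAt
    · exact hf.differentiableAt (isOpen_ball.mem_nhds hmz)
    · exact (hasDerivAt_moebius
        (one_sub_conj_mul_ne_zero hw1 (mem_ball_zero_iff.mp hz))).differentiableAt
  have hg' := hasDerivAt_moebius_comp_comp_moebius hfw1
    (hf.differentiableAt (isOpen_ball.mem_nhds hw))
  obtain ⟨c, hc, hgc⟩ := Complex.affine_of_mapsTo_ball_of_exists_norm_dslope_eq_div' hgd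
    (by rw [hg0]; exact hgm.mono_right ball_subset_closedBall)
    ⟨0, mem_ball_self one_pos, by rw [dslope_same, hg'.deriv, hD, div_one]⟩
  have hfeq : EqOn (moebius (f w) ∘ (· * c) ∘ moebius w) f (ball 0 1) := fun z hz => by
    have hz1 := mem_ball_zero_iff.mp hz
    have hgz : moebius (f w) (f z) = moebius w z * c := by
      simpa [g, moebius_moebius hw1 hz1] using hgc (mapsTo_moebius hw1 hz)
    simp only [Function.comp_apply]
    rw [← hgz, moebius_moebius hfw1 (mem_ball_zero_iff.mp (hfm hz))]
  exact ((bijOn_moebius hfw1).comp ((bijOn_mul_ball (by simpa using hc)).comp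
    (bijOn_moebius hw1))).congr hfeq

section Wirtinger

noncomputable def wirtingerCLM (a b : ℂ) : ℂ →L[ℝ] ℂ :=
  a • ContinuousLinearMap.id ℝ ℂ + b • (conjCLE : ℂ →L[ℝ] ℂ)

@[simp] lemma wirtingerCLM_apply (a b x : ℂ) : wirtingerCLM a b x = a * x + b * conj x := rfl

/-- `f` is real differentiable at `z` with Wirtinger derivatives `∂f(z) = a` and `∂̄f(z) = b`. -/
def HasWirtingerDerivAt (f : ℂ → ℂ) (a b z : ℂ) : Prop :=
  HasFDerivAt f (wirtingerCLM a b) z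

variable {f g : ℂ → ℂ} {a b c d f' z : ℂ}

lemma HasWirtingerDerivAt.wDzbar_eq (h : HasWirtingerDerivAt f a b z) : wDzbar f z = b := by
  rw [wDzbar, h.fderiv]
  simp only [wirtingerCLM_apply, mul_one, map_one, conj_I]
  linear_combination (a - b) / 2 * I_sq

lemma wDzbar_eq_zero_of_eventuallyEq_const (h : f =ᶠ[𝓝 z] fun _ => c) : wDzbar f z = 0 := by
  simp [wDzbar, h.fderiv_eq]

lemma HasDerivAt.hasWirtingerDerivAt (h : HasDerivAt f f' z) : HasWirtingerDerivAt f f' 0 z := by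
  refine (h.hasFDerivAt.restrictScalars ℝ).congr_fderiv ?_
  ext1 x
  simp only [ContinuousLinearMap.coe_restrictScalars', ContinuousLinearMap.toSpanSingleton_apply,
    smul_eq_mul, wirtingerCLM_apply]
  ring

lemma HasDerivAt.hasWirtingerDerivAt_conj (h : HasDerivAt f f' z) :
    HasWirtingerDerivAt (fun x => conj (f x)) 0 (conj f') z := by
  refine (conjCLE.hasFDerivAt.comp z (h.hasFDerivAt.restrictScalars ℝ)).congr_fderiv ?_
  ext1 x
  simp only [ContinuousLinearMap.comp_apply, ContinuousLinearMap.coe_restrictScalars',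
    ContinuousLinearMap.toSpanSingleton_apply, smul_eq_mul, ContinuousLinearEquiv.coe_coe,
    ContinuousAlgEquiv.coeCLE_apply, conjCAE_apply, map_mul, wirtingerCLM_apply]
  ring

namespace HasWirtingerDerivAt

lemma add (hf : HasWirtingerDerivAt f a b z) (hg : HasWirtingerDerivAt g c d z) :
    HasWirtingerDerivAt (fun x => f x + g x) (a + c) (b + d) z := by
  refine (HasFDerivAt.add hf hg).congr_fderiv ?_
  ext1 x
  simp only [add_apply, wirtingerCLM_apply]
  ring

lemma sub (hf : HasWirtingerDerivAt f a b z) (hg : HasWirtingerDerivAt g c d z) :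
    HasWirtingerDerivAt (fun x => f x - g x) (a - c) (b - d) z := by
  refine (HasFDerivAt.sub hf hg).congr_fderiv ?_
  ext1 x
  simp only [sub_apply, wirtingerCLM_apply]
  ring

lemma mul (hf : HasWirtingerDerivAt f a b z) (hg : HasWirtingerDerivAt g c d z) :
    HasWirtingerDerivAt (fun x => f x * g x) (f z * c + g z * a) (f z * d + g z * b) z := by
  refine (HasFDerivAt.mul hf hg).congr_fderiv ?_
  ext1 x
  simp only [add_apply, smul_apply, wirtingerCLM_apply, smul_eq_mul]
  ring

lemma inv (hf : HasWirtingerDerivAt f a b z) (hz : f z ≠ 0) :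
    HasWirtingerDerivAt (fun x => (f x)⁻¹) (-a / f z ^ 2) (-b / f z ^ 2) z := by
  refine ((hasDerivAt_inv hz).hasFDerivAt.restrictScalars ℝ |>.comp z hf).congr_fderiv ?_
  ext1 x
  simp only [ContinuousLinearMap.comp_apply, wirtingerCLM_apply,
    ContinuousLinearMap.coe_restrictScalars', ContinuousLinearMap.toSpanSingleton_apply,
    smul_eq_mul]
  ring

lemma div (hf : HasWirtingerDerivAt f a b z) (hg : HasWirtingerDerivAt g c d z) (hz : g z ≠ 0) :
    HasWirtingerDerivAt (fun x => f x / g x) ((a * g z - f z * c) / g z ^ 2)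
      ((b * g z - f z * d) / g z ^ 2) z := by
  have h := hf.mul (hg.inv hz)
  simp only [← div_eq_mul_inv] at h
  convert h using 1 <;> field_simp <;> ring

end HasWirtingerDerivAt

lemma HasDerivAt.hasWirtingerDerivAt_sq_norm (h : HasDerivAt f f' z) :
    HasWirtingerDerivAt (fun x => (‖f x‖ : ℂ) ^ 2) (conj (f z) * f') (f z * conj f') z := by
  simpa only [mul_conj', mul_zero, add_zero, zero_add] using
    h.hasWirtingerDerivAt.mul h.hasWirtingerDerivAt_conj

end Wirtinger

lemma one_sub_sq_norm_mul_wDzbar_Ah_add_mul_Ah {φ : ℂ → ℂ} {z : ℂ} (hφ : AnalyticAt ℂ φ z)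
    (hφ' : deriv φ z ≠ 0) (hφz : ‖φ z‖ ≠ 1) :
    (1 - (‖z‖ : ℂ) ^ 2) * wDzbar (Ah φ) z + z * Ah φ z = (‖Dh φ z‖ : ℂ) ^ 2 - 1 := by
  have hd0 : HasDerivAt φ (deriv φ z) z := hφ.differentiableAt.hasDerivAt
  have hd1 : HasDerivAt (deriv φ) (deriv (deriv φ) z) z := hφ.deriv.differentiableAt.hasDerivAt
  have hd2 : HasDerivAt (deriv (deriv φ)) (deriv (deriv (deriv φ)) z) z :=
    hφ.deriv.deriv.differentiableAt.hasDerivAt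
  have hden : 1 - (‖φ z‖ : ℂ) ^ 2 ≠ 0 := by
    norm_cast
    rw [sub_eq_zero, eq_comm, pow_eq_one_iff_of_nonneg (norm_nonneg _) two_ne_zero]
    exact hφz
  have hone := (hasDerivAt_const z (1 : ℂ)).hasWirtingerDerivAt
  have hA : HasWirtingerDerivAt (Ah φ) _ _ z :=
    (((hone.sub (hasDerivAt_id z).hasWirtingerDerivAt_sq_norm).div
      (hasDerivAt_const z (2 : ℂ)).hasWirtingerDerivAt two_ne_zero).mul
      ((hd2.div hd1 hφ').hasWirtingerDerivAt) |>.sub (hasDerivAt_id z).hasWirtingerDerivAt_conj).add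
      ((((hone.sub (hasDerivAt_id z).hasWirtingerDerivAt_sq_norm).mul
        hd0.hasWirtingerDerivAt_conj).mul hd1.hasWirtingerDerivAt).div
        (hone.sub hd0.hasWirtingerDerivAt_sq_norm) hden)
  rw [hA.wDzbar_eq, Ah, Dh]
  simp only [← mul_conj'] at hden ⊢
  simp only [id, Pi.div_apply, map_div₀, map_mul, map_sub, map_one, conj_conj]
  have hden' : 1 - conj (φ z) * φ z ≠ 0 := by rwa [mul_comm]
  field_simp
  ring

lemma norm_Dh_eq_one_of_Ah_eventuallyEq_zero {φ : ℂ → ℂ} {z : ℂ} (hφ : AnalyticAt ℂ φ z)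
    (hφ' : deriv φ z ≠ 0) (hφz : ‖φ z‖ ≠ 1) (hA : Ah φ =ᶠ[𝓝 z] fun _ => 0) : ‖Dh φ z‖ = 1 := by
  have h := one_sub_sq_norm_mul_wDzbar_Ah_add_mul_Ah hφ hφ' hφz
  rw [wDzbar_eq_zero_of_eventuallyEq_const hA, hA.eq_of_nhds, mul_zero, mul_zero, add_zero,
    eq_comm, sub_eq_zero] at h
  exact (pow_eq_one_iff_of_nonneg (norm_nonneg _) two_ne_zero).mp (mod_cast h)

theorem A_vanishing_implies_moebius
    (φ : ℂ → ℂ)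
    (hφ : DifferentiableOn ℂ φ (ball (0:ℂ) 1))
    (hφm : MapsTo φ (ball (0:ℂ) 1) (ball (0:ℂ) 1))
    (hφ' : ∀ z ∈ ball (0:ℂ) 1, deriv φ z ≠ 0)
    (w : ℂ) (r : ℝ) (hr : 0 < r) (hsub : ball w r ⊆ ball (0:ℂ) 1)
    (hA : ∀ z ∈ ball w r, Ah φ z = 0) :
    BijOn φ (ball (0:ℂ) 1) (ball (0:ℂ) 1) := by
  have hw : w ∈ ball (0 : ℂ) 1 := hsub (mem_ball_self hr)
  have hAw : Ah φ =ᶠ[𝓝 w] fun _ => 0 := eventually_of_mem (ball_mem_nhds w hr) hA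
  have hφw : ‖φ w‖ ≠ 1 := (mem_ball_zero_iff.mp (hφm hw)).ne
  exact bijOn_ball_of_norm_Dh_eq_one hφ hφm hw
    (norm_Dh_eq_one_of_Ah_eventuallyEq_zero (hφ.analyticOnNhd isOpen_ball w hw) (hφ' w hw) hφw hAw)
end

section
/- Let φ: 𝔻 → 𝔻 be analytic and not constant. At every point z where φ'(z) ≠ 0, the Wirtinger derivative of A_φ with respect to z satisfies (1-|z|²)·∂A_φ/∂z = (1-|z|²)²·S_φ(z)/2 + A_φ(z)² + z̄·A_φ(z), where S_φ = (φ''/φ')' - (1/2)(φ''/φ')² is the Schwarzian derivative. -/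
/-!
Write `P = 1 - |z|²`, `G = φ''/φ'` and `B = φ̄ φ'/(1 - |φ|²)`, so that `A_φ = P (G/2 + B) - z̄`.
On real-differentiable functions `∂/∂z` is a derivation that acts as `d/dz` on holomorphic
functions and kills their conjugates. Hence `∂P = -z̄`, `∂G = G'` and
`∂B = B² + φ̄ φ''/(1 - |φ|²) = B² + G B`, so `P ∂A_φ = P² (G'/2 + G B + B²) - z̄ P (G/2 + B)`.
Since `S_φ = G' - G²/2`, this is `P² S_φ/2 + A_φ (A_φ + z̄)`.
-/

open Complex Metric Set Filter Asymptotics Topology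

open ComplexConjugate

section Wirtinger

variable {f g : ℂ → ℂ} {z : ℂ}

theorem DifferentiableAt.conj (hf : DifferentiableAt ℝ f z) :
    DifferentiableAt ℝ (fun w => conj (f w)) z :=
  hf.star

theorem wDz_eq_of_hasFDerivAt {L : ℂ →L[ℝ] ℂ} (h : HasFDerivAt f L z) :
    wDz f z = (L 1 - I * L I) / 2 := by
  rw [wDz, h.fderiv]

theorem wDz_const_sub (c : ℂ) : wDz (fun w => c - f w) z = -wDz f z := by
  simp only [wDz, fderiv_const_sub, neg_apply]
  ring

theorem wDz_add (hf : DifferentiableAt ℝ f z) (hg : DifferentiableAt ℝ g z) :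
    wDz (fun w => f w + g w) z = wDz f z + wDz g z := by
  rw [wDz_eq_of_hasFDerivAt (hf.hasFDerivAt.fun_add hg.hasFDerivAt), wDz, wDz]
  simp only [add_apply]
  ring

theorem wDz_sub (hf : DifferentiableAt ℝ f z) (hg : DifferentiableAt ℝ g z) :
    wDz (fun w => f w - g w) z = wDz f z - wDz g z := by
  rw [wDz_eq_of_hasFDerivAt (hf.hasFDerivAt.fun_sub hg.hasFDerivAt), wDz, wDz]
  simp only [sub_apply]
  ring

theorem wDz_mul (hf : DifferentiableAt ℝ f z) (hg : DifferentiableAt ℝ g z) :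
    wDz (fun w => f w * g w) z = f z * wDz g z + g z * wDz f z := by
  rw [wDz_eq_of_hasFDerivAt (hf.hasFDerivAt.fun_mul hg.hasFDerivAt), wDz, wDz]
  simp only [add_apply, smul_apply, smul_eq_mul]
  ring

theorem DifferentiableAt.wDz_eq_deriv (hf : DifferentiableAt ℂ f z) : wDz f z = deriv f z := by
  rw [wDz_eq_of_hasFDerivAt hf.hasDerivAt.complexToReal_fderiv]
  simp only [smul_apply, one_apply_eq_self, smul_eq_mul]
  linear_combination (-deriv f z / 2) * I_sq

theorem DifferentiableAt.wDz_conj (hf : DifferentiableAt ℂ f z) :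
    wDz (fun w => conj (f w)) z = 0 := by
  rw [wDz_eq_of_hasFDerivAt (f := fun w => conj (f w)) hf.hasDerivAt.complexToReal_fderiv.star]
  simp only [ContinuousLinearMap.comp_apply, smul_apply, one_apply_eq_self, smul_eq_mul,
    ContinuousLinearEquiv.coe_coe, starL'_apply, star_mul', star_one, Complex.star_def, conj_I]
  linear_combination (conj (deriv f z) / 2) * I_sq

theorem wDz_comp (hg : DifferentiableAt ℂ g (f z)) (hf : DifferentiableAt ℝ f z) :
    wDz (fun w => g (f w)) z = deriv g (f z) * wDz f z := by
  rw [wDz_eq_of_hasFDerivAt (f := fun w => g (f w))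
    (hg.hasDerivAt.complexToReal_fderiv.comp z hf.hasFDerivAt), wDz]
  simp only [ContinuousLinearMap.comp_apply, smul_apply, one_apply_eq_self, smul_eq_mul]
  ring

theorem wDz_div (hf : DifferentiableAt ℝ f z) (hg : DifferentiableAt ℝ g z) (hz : g z ≠ 0) :
    wDz (fun w => f w / g w) z = (g z * wDz f z - f z * wDz g z) / g z ^ 2 := by
  simp only [div_eq_mul_inv]
  rw [wDz_mul hf (hg.fun_inv hz), wDz_comp (g := Inv.inv) (differentiableAt_inv hz) hg, deriv_inv]
  field_simp
  ring

end Wirtinger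

theorem one_sub_mul_conj_ne_zero {w : ℂ} (hw : ‖w‖ < 1) : 1 - w * conj w ≠ 0 := by
  rw [mul_conj', ← ofReal_pow, ← ofReal_one, ← ofReal_sub, ofReal_ne_zero, sub_ne_zero]
  exact (pow_lt_one₀ (norm_nonneg w) hw two_ne_zero).ne'

section HolomorphicWeight

variable {f : ℂ → ℂ} {z : ℂ}

theorem wDz_one_sub_mul_conj (hf : DifferentiableAt ℂ f z) :
    wDz (fun w => 1 - f w * conj (f w)) z = -(conj (f z) * deriv f z) := by
  rw [wDz_const_sub, wDz_mul (hf.restrictScalars ℝ) (hf.restrictScalars ℝ).conj, hf.wDz_conj,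
    hf.wDz_eq_deriv]
  ring

theorem differentiableAt_conj_mul_deriv_div (hf : DifferentiableAt ℂ f z)
    (hf' : DifferentiableAt ℂ (deriv f) z) (hQ : 1 - f z * conj (f z) ≠ 0) :
    DifferentiableAt ℝ (fun w => conj (f w) * deriv f w / (1 - f w * conj (f w))) z := by
  have hfr := hf.restrictScalars ℝ
  simpa only [div_eq_mul_inv] using (hfr.conj.fun_mul (hf'.restrictScalars ℝ)).fun_mul
    (((hfr.fun_mul hfr.conj).const_sub 1).fun_inv hQ)

theorem wDz_conj_mul_deriv_div (hf : DifferentiableAt ℂ f z)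
    (hf' : DifferentiableAt ℂ (deriv f) z) (hQ : 1 - f z * conj (f z) ≠ 0) :
    wDz (fun w => conj (f w) * deriv f w / (1 - f w * conj (f w))) z
      = conj (f z) * deriv (deriv f) z / (1 - f z * conj (f z))
        + (conj (f z) * deriv f z / (1 - f z * conj (f z))) ^ 2 := by
  have hfr := hf.restrictScalars ℝ
  rw [wDz_div (hfr.conj.fun_mul (hf'.restrictScalars ℝ)) ((hfr.fun_mul hfr.conj).const_sub 1) hQ,
    wDz_mul hfr.conj (hf'.restrictScalars ℝ), hf.wDz_conj, hf'.wDz_eq_deriv,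
    wDz_one_sub_mul_conj hf]
  field_simp
  ring

end HolomorphicWeight

theorem Ah_eq (φ : ℂ → ℂ) :
    Ah φ = fun w => (1 - w * conj w) * (deriv (deriv φ) w / deriv φ w / 2
      + conj (φ w) * deriv φ w / (1 - φ w * conj (φ w))) - conj w := by
  funext w
  simp only [Ah, mul_conj']
  ring

theorem wirtinger_dz_of_A_general
    (φ : ℂ → ℂ)
    (hφ : DifferentiableOn ℂ φ (ball (0:ℂ) 1))
    (hφm : MapsTo φ (ball (0:ℂ) 1) (ball (0:ℂ) 1)) :
    ∀ z ∈ ball (0:ℂ) 1, deriv φ z ≠ 0 →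
      (1 - (‖z‖ : ℂ)^2) * wDz (Ah φ) z
        = (1 - (‖z‖ : ℂ)^2)^2 * Sh φ z / 2 + (Ah φ z)^2 + (starRingEnd ℂ) z * Ah φ z := by
  intro z hz hφ'
  have hφa : AnalyticOnNhd ℂ φ (ball 0 1) := hφ.analyticOnNhd isOpen_ball
  have h1 : DifferentiableAt ℂ φ z := (hφa z hz).differentiableAt
  have h2 : DifferentiableAt ℂ (deriv φ) z := (hφa.deriv z hz).differentiableAt
  have h3 : DifferentiableAt ℂ (deriv (deriv φ)) z := (hφa.deriv.deriv z hz).differentiableAt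
  have hQ := one_sub_mul_conj_ne_zero (mem_ball_zero_iff.mp (hφm hz))
  have hG : DifferentiableAt ℂ (fun w => deriv (deriv φ) w / deriv φ w / 2) z :=
    (h3.div h2 hφ').div_const 2
  have hP : DifferentiableAt ℝ (fun w : ℂ => 1 - w * conj w) z :=
    (differentiableAt_fun_id.fun_mul differentiableAt_fun_id.conj).const_sub 1
  have hB := differentiableAt_conj_mul_deriv_div h1 h2 hQ
  rw [Ah_eq, wDz_sub (hP.fun_mul ((hG.restrictScalars ℝ).fun_add hB)) differentiableAt_fun_id.conj,
    wDz_mul hP ((hG.restrictScalars ℝ).fun_add hB), wDz_add (hG.restrictScalars ℝ) hB,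
    hG.wDz_eq_deriv, wDz_conj_mul_deriv_div h1 h2 hQ, wDz_one_sub_mul_conj differentiableAt_fun_id,
    differentiableAt_fun_id.wDz_conj, deriv_div_const, deriv_fun_div h3 h2 hφ']
  simp only [Sh, ← mul_conj', deriv_id'']
  -- `field_simp` meets this denominator in both orders of the product
  have hQ' : 1 - conj (φ z) * φ z ≠ 0 := by rwa [mul_comm]
  field_simp
  ring

theorem wirtinger_dz_of_A
    (φ : ℂ → ℂ)
    (hφ : DifferentiableOn ℂ φ (ball (0:ℂ) 1))
    (hφm : MapsTo φ (ball (0:ℂ) 1) (ball (0:ℂ) 1))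
    (hφnc : ¬ ∃ c, ∀ z ∈ ball (0:ℂ) 1, φ z = c) :
    ∀ z ∈ ball (0:ℂ) 1, deriv φ z ≠ 0 →
      (1 - (‖z‖ : ℂ)^2) * wDz (Ah φ) z
        = (1 - (‖z‖ : ℂ)^2)^2 * Sh φ z / 2 + (Ah φ z)^2 + (starRingEnd ℂ) z * Ah φ z :=
  wirtinger_dz_of_A_general φ hφ hφm
end

section
/- For the Blaschke product φ(z) = (z² - c²)/(1 - c²z²) with 0 < c < 1, one has A_φ(z) = (1-|z|²)²/(2z(1+|z|²)) for all nonzero z in the unit disk; in particular A_φ never vanishes on 𝔻 \ {0}. -/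
/-!
Write `φ = T ∘ (·)²` with `T w = (w - a) / (1 - ā w)` a disk automorphism. Then
`φ''/φ' = (1 + 3āz²) / (z (1 - āz²))`, and `1 - |T w|² = (1 - |a|²)(1 - |w|²) / |1 - āw|²`
gives the hyperbolic derivative `D_φ(z) = 2z (1 - a z̄²) / ((1 - āz²)(1 + |z|²))`.
Substituting both into `A_φ = (1 - |z|²)/2 · φ''/φ' - z̄ + conj(φ) D_φ`, the factor `1 - āz²`
cancels and the value for the plain square map `z²` remains, independently of `a`.
-/

open Complex Metric Set Filter Asymptotics Topology

open ComplexConjugate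

/-- Squaring followed by the disk automorphism sending `a` to `0`; `a = c²` gives the `φ` of the
theorem. -/
noncomputable def blaschkeSq (a z : ℂ) : ℂ := (z ^ 2 - a) / (1 - conj a * z ^ 2)

section NormLtOne

variable {R : Type*} [NormedRing R] [NormOneClass R] {v w : R}

lemma one_sub_ne_zero_of_norm_lt_one (hw : ‖w‖ < 1) : 1 - w ≠ 0 := by
  rw [sub_ne_zero]
  rintro rfl
  simp at hw

lemma one_add_ne_zero_of_norm_lt_one (hw : ‖w‖ < 1) : 1 + w ≠ 0 := by
  simpa using one_sub_ne_zero_of_norm_lt_one (w := -w) (by simpa using hw)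

omit [NormOneClass R] in
lemma norm_mul_lt_one (hv : ‖v‖ < 1) (hw : ‖w‖ < 1) : ‖v * w‖ < 1 :=
  (norm_mul_le v w).trans_lt (mul_lt_one_of_nonneg_of_lt_one_left (norm_nonneg v) hv hw.le)

end NormLtOne

section RationalDerivatives

variable {𝕜 : Type*} [NontriviallyNormedField 𝕜]

lemma hasDerivAt_sq_sub_div_one_sub_mul_sq (a b z : 𝕜) (h : 1 - b * z ^ 2 ≠ 0) :
    HasDerivAt (fun w => (w ^ 2 - a) / (1 - b * w ^ 2))
      (2 * z * (1 - a * b) / (1 - b * z ^ 2) ^ 2) z := by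
  have hnum : HasDerivAt (fun w : 𝕜 => w ^ 2 - a) (2 * z) z := by
    simpa using (hasDerivAt_pow 2 z).sub_const a
  have hden : HasDerivAt (fun w : 𝕜 => 1 - b * w ^ 2) (-(b * (2 * z))) z := by
    simpa using ((hasDerivAt_pow 2 z).const_mul b).const_sub 1
  refine (hnum.fun_div hden h).congr_deriv ?_
  field_simp
  ring

lemma hasDerivAt_div_one_sub_mul_sq_sq (b z : 𝕜) (h : 1 - b * z ^ 2 ≠ 0) :
    HasDerivAt (fun w => w / (1 - b * w ^ 2) ^ 2)
      ((1 + 3 * b * z ^ 2) / (1 - b * z ^ 2) ^ 3) z := by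
  have hden : HasDerivAt (fun w : 𝕜 => (1 - b * w ^ 2) ^ 2)
      (2 * (1 - b * z ^ 2) * (-(b * (2 * z)))) z := by
    simpa using (((hasDerivAt_pow 2 z).const_mul b).const_sub 1).fun_pow 2
  refine ((hasDerivAt_id' z).fun_div hden (pow_ne_zero 2 h)).congr_deriv ?_
  field_simp
  ring

end RationalDerivatives

lemma deriv_blaschkeSq {a z : ℂ} (h : 1 - conj a * z ^ 2 ≠ 0) :
    deriv (blaschkeSq a) z = 2 * z * (1 - a * conj a) / (1 - conj a * z ^ 2) ^ 2 :=
  (hasDerivAt_sq_sub_div_one_sub_mul_sq a (conj a) z h).deriv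

lemma deriv_deriv_div_deriv_blaschkeSq {a z : ℂ} (ha : 1 - a * conj a ≠ 0) (hz : z ≠ 0)
    (h : 1 - conj a * z ^ 2 ≠ 0) :
    deriv (deriv (blaschkeSq a)) z / deriv (blaschkeSq a) z
      = (1 + 3 * conj a * z ^ 2) / (z * (1 - conj a * z ^ 2)) := by
  have hopen : IsOpen {w : ℂ | 1 - conj a * w ^ 2 ≠ 0} :=
    isOpen_ne_fun (by fun_prop) continuous_const
  have hderiv : deriv (blaschkeSq a)
      =ᶠ[𝓝 z] fun w => 2 * (1 - a * conj a) * (w / (1 - conj a * w ^ 2) ^ 2) := by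
    filter_upwards [hopen.mem_nhds h] with w hw
    rw [deriv_blaschkeSq hw]
    ring
  rw [hderiv.deriv_eq, ((hasDerivAt_div_one_sub_mul_sq_sq _ z h).const_mul _).deriv,
    deriv_blaschkeSq h]
  field_simp

lemma conj_blaschkeSq (a z : ℂ) :
    conj (blaschkeSq a z) = (conj z ^ 2 - conj a) / (1 - a * conj z ^ 2) := by
  simp [blaschkeSq, map_div₀]

lemma one_sub_mul_conj_blaschkeSq {a z : ℂ} (h : 1 - conj a * z ^ 2 ≠ 0)
    (h' : 1 - a * conj z ^ 2 ≠ 0) :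
    1 - blaschkeSq a z * conj (blaschkeSq a z)
      = (1 - a * conj a) * (1 - z * conj z) * (1 + z * conj z)
        / ((1 - conj a * z ^ 2) * (1 - a * conj z ^ 2)) := by
  rw [conj_blaschkeSq, blaschkeSq, div_mul_div_comm, one_sub_div (mul_ne_zero h h')]
  ring

lemma Ah_eq_add_conj_mul_Dh (φ : ℂ → ℂ) (z : ℂ) :
    Ah φ z = (1 - (‖z‖ : ℂ) ^ 2) / 2 * (deriv (deriv φ) z / deriv φ z) - conj z
      + conj (φ z) * Dh φ z := by
  rw [Ah, Dh]
  ring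

lemma factors_ne_zero_of_norm_lt_one {a z : ℂ} (ha : ‖a‖ < 1) (hz : ‖z‖ < 1) :
    1 - conj a * z ^ 2 ≠ 0 ∧ 1 - a * conj z ^ 2 ≠ 0 ∧ 1 - a * conj a ≠ 0 ∧
      1 - z * conj z ≠ 0 ∧ 1 + z * conj z ≠ 0 := by
  have ha' : ‖conj a‖ < 1 := by rwa [RCLike.norm_conj]
  have hz' : ‖conj z‖ < 1 := by rwa [RCLike.norm_conj]
  have hzsq : ‖z ^ 2‖ < 1 := by
    rw [norm_pow]
    exact pow_lt_one₀ (norm_nonneg z) hz two_ne_zero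
  have hzsq' : ‖conj z ^ 2‖ < 1 := by rwa [← map_pow, RCLike.norm_conj]
  exact ⟨one_sub_ne_zero_of_norm_lt_one (norm_mul_lt_one ha' hzsq),
    one_sub_ne_zero_of_norm_lt_one (norm_mul_lt_one ha hzsq'),
    one_sub_ne_zero_of_norm_lt_one (norm_mul_lt_one ha ha'),
    one_sub_ne_zero_of_norm_lt_one (norm_mul_lt_one hz hz'),
    one_add_ne_zero_of_norm_lt_one (norm_mul_lt_one hz hz')⟩

lemma Dh_blaschkeSq {a z : ℂ} (ha : ‖a‖ < 1) (hz : ‖z‖ < 1) :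
    Dh (blaschkeSq a) z
      = 2 * z * (1 - a * conj z ^ 2) / ((1 - conj a * z ^ 2) * (1 + z * conj z)) := by
  obtain ⟨hden, hden', ha1, hz1, hz2⟩ := factors_ne_zero_of_norm_lt_one ha hz
  rw [Dh, deriv_blaschkeSq hden, ← mul_conj', ← mul_conj',
    one_sub_mul_conj_blaschkeSq hden hden']
  field_simp

theorem Ah_blaschkeSq {a z : ℂ} (ha : ‖a‖ < 1) (hz : ‖z‖ < 1) (hz0 : z ≠ 0) :
    Ah (blaschkeSq a) z = (1 - (‖z‖ : ℂ) ^ 2) ^ 2 / (2 * z * (1 + (‖z‖ : ℂ) ^ 2)) := by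
  obtain ⟨hden, hden', ha1, -, hz2⟩ := factors_ne_zero_of_norm_lt_one ha hz
  have hterm : conj (blaschkeSq a z) * Dh (blaschkeSq a) z
      = 2 * z * (conj z ^ 2 - conj a) / ((1 - conj a * z ^ 2) * (1 + z * conj z)) := by
    rw [Dh_blaschkeSq ha hz, conj_blaschkeSq, div_mul_div_comm,
      div_eq_div_iff (mul_ne_zero hden' (mul_ne_zero hden hz2)) (mul_ne_zero hden hz2)]
    ring
  have h2z : 2 * (z * (1 - conj a * z ^ 2)) ≠ 0 := mul_ne_zero two_ne_zero (mul_ne_zero hz0 hden)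
  rw [Ah_eq_add_conj_mul_Dh, deriv_deriv_div_deriv_blaschkeSq ha1 hz0 hden, hterm, ← mul_conj',
    div_mul_div_comm, div_sub' h2z, div_add_div _ _ h2z (mul_ne_zero hden hz2),
    div_eq_div_iff (mul_ne_zero h2z (mul_ne_zero hden hz2))
      (mul_ne_zero (mul_ne_zero two_ne_zero hz0) hz2)]
  ring

theorem blaschke_square_A_formula (c : ℝ) (hc : 0 < c) (hc1 : c < 1) :
    let φ : ℂ → ℂ := fun z => (z^2 - (c:ℂ)^2) / (1 - (c:ℂ)^2 * z^2)
    ∀ z ∈ ball (0:ℂ) 1, z ≠ 0 →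
      Ah φ z = (1 - (‖z‖:ℂ)^2)^2 / (2 * z * (1 + (‖z‖:ℂ)^2)) ∧ Ah φ z ≠ 0 := by
  intro φ z hz hz0
  have hφ : φ = blaschkeSq ((c : ℂ) ^ 2) := by
    funext w
    simp [φ, blaschkeSq]
  have ha : ‖(c : ℂ) ^ 2‖ < 1 := by
    rw [norm_pow, Complex.norm_real, Real.norm_of_nonneg hc.le]
    nlinarith
  have hz1 : ‖z‖ < 1 := mem_ball_zero_iff.mp hz
  have hA : Ah φ z = _ := hφ ▸ Ah_blaschkeSq ha hz1 hz0
  obtain ⟨-, -, -, hz_sub, hz_add⟩ := factors_ne_zero_of_norm_lt_one ha hz1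
  refine ⟨hA, hA ▸ div_ne_zero ?_ ?_⟩
  · rw [← mul_conj']
    exact pow_ne_zero 2 hz_sub
  · rw [← mul_conj']
    exact mul_ne_zero (mul_ne_zero two_ne_zero hz0) hz_add
end

section
/- Let φ(z) = e^{-g(z)} with g(z) = ((1+z)/(1-z))^a, 0 < a < 1 (principal branch). Then φ maps the unit disk into itself and |D_φ(z)| ≤ a for all z ∈ 𝔻. -/
open Complex Metric Set Filter Asymptotics Topology

/-! With `w = (1+z)/(1-z)`, which lies in the right half-plane, one has `|φ| = e^{-Re g} < 1`
and `|D_φ(z)| = a · Re w · |w|^{a-1} / sinh (Re g)`. Writing `w = r e^{iθ}` with `|θ| ≤ π/2`, the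
numerator is `a r^a cos θ ≤ a r^a cos (aθ) = a Re g`, and `x ≤ sinh x` for `x ≥ 0`. -/

lemma norm_Dh_exp_neg {g : ℂ → ℂ} {z : ℂ} (hg : DifferentiableAt ℂ g z) :
    ‖Dh (fun z => exp (-g z)) z‖ =
      |1 - ‖z‖ ^ 2| * ‖deriv g z‖ / (2 * |Real.sinh (g z).re|) := by
  set u := (g z).re
  have hderiv : deriv (fun z => exp (-g z)) z = -(exp (-g z) * deriv g z) := by
    simpa using hg.hasDerivAt.neg.cexp.deriv
  have hden : 1 - Real.exp (-u) ^ 2 = Real.exp (-u) * (2 * Real.sinh u) := by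
    rw [Real.sinh_eq, mul_div_cancel₀ _ two_ne_zero, mul_sub, ← Real.exp_add, neg_add_cancel,
      Real.exp_zero, sq]
  have hnorm : ‖exp (-g z)‖ = Real.exp (-u) := by rw [norm_exp, neg_re]
  rw [Dh, hderiv, hnorm, norm_div, norm_mul, norm_neg, norm_mul, hnorm]
  norm_cast
  rw [hden, Real.norm_eq_abs, Real.norm_eq_abs, abs_mul, abs_mul, abs_of_pos (Real.exp_pos _),
    abs_two, mul_left_comm, mul_div_mul_left _ _ (Real.exp_pos _).ne']

lemma re_mul_norm_rpow_sub_one_le_re_cpow {w : ℂ} (hw : 0 ≤ w.re) {a : ℝ} (ha0 : 0 ≤ a)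
    (ha1 : a ≤ 1) : w.re * ‖w‖ ^ (a - 1) ≤ (w ^ (a : ℂ)).re := by
  rcases eq_or_ne w 0 with rfl | hw0
  · simpa [cpow_ofReal_re] using Real.rpow_nonneg le_rfl a
  have harg : |arg w| ≤ Real.pi / 2 := abs_arg_le_pi_div_two_iff.2 hw
  have hcos : Real.cos (arg w) ≤ Real.cos (arg w * a) := by
    rw [← Real.cos_abs (arg w), ← Real.cos_abs (arg w * a), abs_mul, abs_of_nonneg ha0]
    exact Real.cos_le_cos_of_nonneg_of_le_pi (by positivity) (by linarith [Real.pi_pos])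
      (mul_le_of_le_one_right (abs_nonneg _) ha1)
  calc w.re * ‖w‖ ^ (a - 1) = ‖w‖ ^ a * Real.cos (arg w) := by
        rw [← norm_mul_cos_arg, Real.rpow_sub_one (norm_ne_zero_iff.2 hw0)]
        field_simp
    _ ≤ (w ^ (a : ℂ)).re := by
        rw [cpow_ofReal_re]; exact mul_le_mul_of_nonneg_left hcos (by positivity)

lemma re_cpow_pos_of_re_pos {w : ℂ} (hw : 0 < w.re) {a : ℝ} (ha0 : 0 ≤ a) (ha1 : a ≤ 1) :
    0 < (w ^ (a : ℂ)).re :=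
  (mul_pos hw (Real.rpow_pos_of_pos (hw.trans_le (re_le_norm w)) _)).trans_le
    (re_mul_norm_rpow_sub_one_le_re_cpow hw.le ha0 ha1)

lemma one_sub_ne_zero_of_norm_lt_one_s14 {z : ℂ} (hz : ‖z‖ < 1) : 1 - z ≠ 0 :=
  sub_ne_zero.2 fun h => by simp [← h] at hz

lemma re_one_add_div_one_sub (z : ℂ) :
    ((1 + z) / (1 - z)).re = (1 - ‖z‖ ^ 2) / ‖1 - z‖ ^ 2 := by
  rw [div_re, ← normSq_eq_norm_sq, ← normSq_eq_norm_sq, normSq_apply z]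
  simp only [add_re, sub_re, one_re, add_im, sub_im, one_im]
  ring

lemma re_one_add_div_one_sub_pos {z : ℂ} (hz : ‖z‖ < 1) : 0 < ((1 + z) / (1 - z)).re := by
  have hz1 := one_sub_ne_zero_of_norm_lt_one_s14 hz
  have hz2 : ‖z‖ ^ 2 < 1 := by nlinarith [norm_nonneg z]
  rw [re_one_add_div_one_sub]
  exact div_pos (by linarith) (by positivity)

lemma hasDerivAt_cpow_one_add_div_one_sub (a : ℝ) {z : ℂ} (hz : ‖z‖ < 1) :
    HasDerivAt (fun z : ℂ => ((1 + z) / (1 - z)) ^ (a : ℂ))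
      (a * ((1 + z) / (1 - z)) ^ ((a : ℂ) - 1) * (2 / (1 - z) ^ 2)) z := by
  have hz1 := one_sub_ne_zero_of_norm_lt_one_s14 hz
  have hw : HasDerivAt (fun z : ℂ => (1 + z) / (1 - z)) (2 / (1 - z) ^ 2) z := by
    refine (((hasDerivAt_id' z).const_add 1).div ((hasDerivAt_id' z).const_sub 1) hz1).congr_deriv
      ?_
    ring
  exact hw.cpow_const (mem_slitPlane_iff.2 (Or.inl (re_one_add_div_one_sub_pos hz)))

lemma norm_Dh_exp_neg_cpow_one_add_div_one_sub {a : ℝ} (ha : 0 ≤ a) {z : ℂ} (hz : ‖z‖ < 1) :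
    ‖Dh (fun z => exp (-(((1 + z) / (1 - z)) ^ (a : ℂ)))) z‖ =
      a * (((1 + z) / (1 - z)).re * ‖(1 + z) / (1 - z)‖ ^ (a - 1)) /
        |Real.sinh (((1 + z) / (1 - z)) ^ (a : ℂ)).re| := by
  have hd := hasDerivAt_cpow_one_add_div_one_sub a hz
  have hz1 := one_sub_ne_zero_of_norm_lt_one_s14 hz
  have hz2 : 0 < 1 - ‖z‖ ^ 2 := by nlinarith [norm_nonneg z]
  have hnorm : ‖(a : ℂ) * ((1 + z) / (1 - z)) ^ ((a : ℂ) - 1) * (2 / (1 - z) ^ 2)‖ =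
      a * ‖(1 + z) / (1 - z)‖ ^ (a - 1) * (2 / ‖1 - z‖ ^ 2) := by
    have hexp : (a : ℂ) - 1 = ((a - 1 : ℝ) : ℂ) := by push_cast; ring
    rw [hexp, norm_mul, norm_mul, norm_cpow_real, norm_div, norm_div, norm_pow, norm_real,
      Real.norm_of_nonneg ha, Complex.norm_two]
  rw [norm_Dh_exp_neg hd.differentiableAt, hd.deriv, abs_of_pos hz2, hnorm,
    re_one_add_div_one_sub]
  field_simp

theorem exp_lens_map_bound (a : ℝ) (ha : 0 < a) (ha1 : a < 1) :
    let g : ℂ → ℂ := fun z => ((1 + z) / (1 - z)) ^ (a : ℂ)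
    let φ : ℂ → ℂ := fun z => Complex.exp (-(g z))
    MapsTo φ (ball (0:ℂ) 1) (ball (0:ℂ) 1) ∧
    ∀ z ∈ ball (0:ℂ) 1, ‖Dh φ z‖ ≤ a := by
  intro g φ
  have hw : ∀ z ∈ ball (0:ℂ) 1, 0 < ((1 + z) / (1 - z)).re := fun z hz =>
    re_one_add_div_one_sub_pos (mem_ball_zero_iff.1 hz)
  have hu : ∀ z ∈ ball (0:ℂ) 1, 0 < (g z).re := fun z hz =>
    re_cpow_pos_of_re_pos (hw z hz) ha.le ha1.le
  refine ⟨fun z hz => ?_, fun z hz => ?_⟩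
  · rw [mem_ball_zero_iff, norm_exp, neg_re, Real.exp_lt_one_iff, neg_lt_zero]
    exact hu z hz
  have hsinh : 0 < Real.sinh (g z).re := Real.sinh_pos_iff.2 (hu z hz)
  calc ‖Dh φ z‖
      = a * (((1 + z) / (1 - z)).re * ‖(1 + z) / (1 - z)‖ ^ (a - 1)) /
          |Real.sinh (g z).re| :=
        norm_Dh_exp_neg_cpow_one_add_div_one_sub ha.le (mem_ball_zero_iff.1 hz)
    _ ≤ a * (g z).re / Real.sinh (g z).re := by
        rw [abs_of_pos hsinh]
        gcongr
        exact re_mul_norm_rpow_sub_one_le_re_cpow (hw z hz).le ha.le ha1.le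
    _ ≤ a := by
        rw [div_le_iff₀ hsinh]
        exact mul_le_mul_of_nonneg_left (Real.self_le_sinh_iff.2 (hu z hz).le) ha.le
end

section
/- Let φ(z) = e^{-g(z)} with g(z) = ((1+z)/(1-z))^a, 0 < a < 1 (principal branch). For every ζ on the unit circle with ζ ≠ -1, |D_φ(z)| → 0 as z → ζ within the unit disk. -/
open Complex Metric Set Filter Asymptotics Topology

/-!
With `g = ((1+z)/(1-z))^a` one has `g' = 2ag/(1-z²)` and `|φ| = e^{-Re g}`, whence
`|D_φ(z)| = a · (1-|z|²)/|1-z²| · |g(z)| / sinh(Re g(z))`. The Cayley map sends the closed disk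
into the closed right half-plane, so `Re g ≥ cos(aπ/2) |g|` there. For `ζ ≠ ±1` the right-hand side
is continuous at `ζ` with `Re g(ζ) > 0`, and the factor `1-|z|²` makes it vanish on the circle.
At `ζ = 1`, `(1-|z|²)/|1-z²| ≤ 1` gives `|D_φ| ≤ a/cos(aπ/2) · x/sinh x` with `x = Re g → ∞`.
-/

namespace ExpLensMap

lemma cayley_re (z : ℂ) :
    ((1 + z) / (1 - z)).re = (1 - normSq z) / normSq (1 - z) := by
  rw [div_re, ← add_div]
  congr 1
  simp only [normSq_apply, add_re, add_im, sub_re, sub_im, one_re, one_im]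
  ring

lemma cayley_re_nonneg {z : ℂ} (hz : ‖z‖ ≤ 1) : 0 ≤ ((1 + z) / (1 - z)).re := by
  rw [cayley_re, normSq_eq_norm_sq]
  exact div_nonneg (by nlinarith [norm_nonneg z]) (normSq_nonneg _)

lemma mem_slitPlane_of_re_nonneg {w : ℂ} (hre : 0 ≤ w.re) (hw : w ≠ 0) : w ∈ slitPlane := by
  rcases hre.lt_or_eq with hpos | hzero
  · exact mem_slitPlane_iff.mpr (Or.inl hpos)
  · exact mem_slitPlane_iff.mpr (Or.inr fun him => hw (Complex.ext hzero.symm him))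

lemma cayley_mem_slitPlane {z : ℂ} (hz : ‖z‖ ≤ 1) (hz1 : z ≠ 1) (hz1' : z ≠ -1) :
    (1 + z) / (1 - z) ∈ slitPlane :=
  mem_slitPlane_of_re_nonneg (cayley_re_nonneg hz) <|
    div_ne_zero (fun h => hz1' (by linear_combination h)) (sub_ne_zero.mpr hz1.symm)

lemma cos_mul_norm_cpow_le_re {a : ℝ} (ha0 : 0 ≤ a) (ha2 : a ≤ 2) {w : ℂ} (hw : 0 ≤ w.re) :
    Real.cos (a * (Real.pi / 2)) * ‖w ^ (a : ℂ)‖ ≤ (w ^ (a : ℂ)).re := by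
  have harg : |w.arg * a| ≤ a * (Real.pi / 2) := by
    rw [abs_mul, abs_of_nonneg ha0, mul_comm]
    exact mul_le_mul_of_nonneg_left (abs_arg_le_pi_div_two_iff.mpr hw) ha0
  have hcos : Real.cos (a * (Real.pi / 2)) ≤ Real.cos (w.arg * a) := by
    rw [← Real.cos_abs (w.arg * a)]
    exact Real.cos_le_cos_of_nonneg_of_le_pi (abs_nonneg _) (by nlinarith [Real.pi_pos]) harg
  rw [cpow_ofReal_re, norm_cpow_real, mul_comm]
  exact mul_le_mul_of_nonneg_left hcos (Real.rpow_nonneg (norm_nonneg w) a)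

lemma cos_mul_pi_div_two_pos {a : ℝ} (ha : -1 < a) (ha1 : a < 1) :
    0 < Real.cos (a * (Real.pi / 2)) :=
  Real.cos_pos_of_mem_Ioo ⟨by nlinarith [Real.pi_pos], by nlinarith [Real.pi_pos]⟩

lemma exp_neg_div_one_sub_exp_neg_sq (x : ℝ) :
    Real.exp (-x) / (1 - Real.exp (-x) ^ 2) = 1 / (2 * Real.sinh x) := by
  rw [Real.sinh_eq, ← mul_div_mul_right _ _ (Real.exp_pos x).ne']
  congr 1
  · rw [← Real.exp_add]; simp
  · rw [sq, sub_mul, mul_assoc, ← Real.exp_add]; simp [mul_div_cancel₀]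

lemma tendsto_div_sinh_atTop : Tendsto (fun x => x / Real.sinh x) atTop (𝓝 0) := by
  have hnum := (Real.tendsto_pow_mul_exp_neg_atTop_nhds_zero 1).const_mul 2
  have hden : Tendsto (fun x : ℝ => 1 - Real.exp (-x) ^ 2) atTop (𝓝 1) := by
    simpa using ((Real.tendsto_exp_neg_atTop_nhds_zero.pow 2).const_sub (1 : ℝ))
  convert (hnum.div hden one_ne_zero) using 2 with x
  · have h := exp_neg_div_one_sub_exp_neg_sq x
    simp only [Pi.div_apply, pow_one]
    rw [← mul_assoc, mul_div_assoc, h]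
    ring
  · simp

lemma norm_Dh_of_hasDerivAt {φ : ℂ → ℂ} {φ' z : ℂ} (hz : ‖z‖ ≤ 1) (hφ : ‖φ z‖ ≤ 1)
    (h : HasDerivAt φ φ' z) :
    ‖Dh φ z‖ = (1 - ‖z‖ ^ 2) * ‖φ'‖ / (1 - ‖φ z‖ ^ 2) := by
  have hcast : ∀ x : ℝ, (1 - (x : ℂ) ^ 2) = ((1 - x ^ 2 : ℝ) : ℂ) := fun x => by push_cast; rfl
  rw [Dh, h.deriv, norm_div, norm_mul, hcast, hcast, norm_real, norm_real, Real.norm_eq_abs,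
    Real.norm_eq_abs, abs_of_nonneg (by nlinarith [norm_nonneg z]),
    abs_of_nonneg (by nlinarith [norm_nonneg (φ z)])]

/-- The paper's `g`; `expLensMap a` below is its `φ = e^{-g}`. -/
noncomputable def cayleyPow (c : ℂ) (z : ℂ) : ℂ := ((1 + z) / (1 - z)) ^ c

noncomputable def expLensMap (a : ℝ) (z : ℂ) : ℂ := exp (-cayleyPow a z)

lemma hasDerivAt_cayleyPow (c : ℂ) {z : ℂ} (hz1 : z ≠ 1) (hw : (1 + z) / (1 - z) ∈ slitPlane) :
    HasDerivAt (cayleyPow c) (2 * c * cayleyPow c z / (1 - z ^ 2)) z := by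
  have h1 : 1 - z ≠ 0 := sub_ne_zero.mpr hz1.symm
  have hw0 := slitPlane_ne_zero hw
  have h1' : 1 + z ≠ 0 := fun h => hw0 (by rw [h, zero_div])
  have hcayley : HasDerivAt (fun z : ℂ => (1 + z) / (1 - z)) (2 / (1 - z) ^ 2) z :=
    (((hasDerivAt_id z).const_add 1).div ((hasDerivAt_id z).const_sub 1) h1).congr_deriv
      (by simp only [id]; ring)
  refine (hcayley.cpow_const (c := c) hw).congr_deriv ?_
  rw [cpow_sub _ _ hw0, cpow_one, cayleyPow, show 1 - z ^ 2 = (1 - z) * (1 + z) by ring]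
  field_simp

lemma norm_Dh_expLensMap {a : ℝ} (ha0 : 0 ≤ a) (ha1 : a ≤ 1) {z : ℂ} (hz : ‖z‖ < 1) :
    ‖Dh (expLensMap a) z‖ =
      a * ((1 - ‖z‖ ^ 2) / ‖1 - z ^ 2‖) * ‖cayleyPow a z‖ / Real.sinh (cayleyPow a z).re := by
  have hz1 : z ≠ 1 := by rintro rfl; simp at hz
  have hz1' : z ≠ -1 := by rintro rfl; simp at hz
  have hslit := cayley_mem_slitPlane hz.le hz1 hz1'
  set x := (cayleyPow a z).re
  have hx : 0 ≤ x :=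
    (mul_nonneg (Real.cos_nonneg_of_neg_pi_div_two_le_of_le (by nlinarith [Real.pi_pos])
      (by nlinarith [Real.pi_pos])) (norm_nonneg _)).trans
      (cos_mul_norm_cpow_le_re ha0 (by linarith) (cayley_re_nonneg hz.le))
  have hφ : ‖expLensMap a z‖ = Real.exp (-x) := by rw [expLensMap, norm_exp, neg_re]
  have hderiv : HasDerivAt (expLensMap a)
      (expLensMap a z * -(2 * a * cayleyPow a z / (1 - z ^ 2))) z :=
    (hasDerivAt_cayleyPow a hz1 hslit).neg.cexp
  rw [norm_Dh_of_hasDerivAt hz.le (by rw [hφ]; exact Real.exp_le_one_iff.mpr (by linarith))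
    hderiv, norm_mul, norm_neg, hφ,
    norm_div, norm_mul, norm_mul, norm_real, Real.norm_eq_abs, abs_of_nonneg ha0, Complex.norm_two]
  calc (1 - ‖z‖ ^ 2) * (Real.exp (-x) * (2 * a * ‖cayleyPow a z‖ / ‖1 - z ^ 2‖)) /
        (1 - Real.exp (-x) ^ 2)
      = 2 * a * ((1 - ‖z‖ ^ 2) / ‖1 - z ^ 2‖) * ‖cayleyPow a z‖ *
          (Real.exp (-x) / (1 - Real.exp (-x) ^ 2)) := by ring
    _ = _ := by rw [exp_neg_div_one_sub_exp_neg_sq]; ring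

lemma tendsto_norm_cayley_atTop :
    Tendsto (fun z : ℂ => ‖(1 + z) / (1 - z)‖) (𝓝[≠] 1) atTop := by
  have hnum : Tendsto (fun z : ℂ => ‖1 + z‖) (𝓝[≠] 1) (𝓝 2) := by
    have h : Tendsto (fun z : ℂ => ‖1 + z‖) (𝓝 1) (𝓝 ‖(1 : ℂ) + 1‖) :=
      (continuous_const.add continuous_id).norm.tendsto 1
    norm_num at h
    exact h.mono_left nhdsWithin_le_nhds
  have hden : Tendsto (fun z : ℂ => 1 - z) (𝓝[≠] 1) (𝓝[≠] 0) := by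
    refine tendsto_nhdsWithin_of_tendsto_nhds_of_eventually_within _ ?_ ?_
    · have h : Tendsto (fun z : ℂ => 1 - z) (𝓝 1) (𝓝 (1 - 1)) :=
        (continuous_const.sub continuous_id).tendsto 1
      simpa using h.mono_left nhdsWithin_le_nhds
    · filter_upwards [self_mem_nhdsWithin] with z hz
      exact sub_ne_zero.mpr (Ne.symm hz)
  simpa only [div_eq_mul_inv, norm_mul, Function.comp_def] using
    hnum.pos_mul_atTop two_pos (tendsto_norm_inv_nhdsNE_zero_atTop.comp hden)

lemma tendsto_re_cayleyPow_atTop {a : ℝ} (ha0 : 0 < a) (ha1 : a < 1) :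
    Tendsto (fun z => (cayleyPow a z).re) (𝓝[ball 0 1] 1) atTop := by
  have hcos := cos_mul_pi_div_two_pos (by linarith) ha1
  have hball : 𝓝[ball (0 : ℂ) 1] 1 ≤ 𝓝[≠] 1 :=
    nhdsWithin_mono _ fun z hz h1 => by simp [mem_singleton_iff.mp h1] at hz
  have hnorm : Tendsto (fun z => Real.cos (a * (Real.pi / 2)) * ‖cayleyPow a z‖)
      (𝓝[ball 0 1] 1) atTop := by
    simp only [cayleyPow, norm_cpow_real]
    exact ((tendsto_rpow_atTop ha0).comp
      (tendsto_norm_cayley_atTop.mono_left hball)).const_mul_atTop hcos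
  refine tendsto_atTop_mono' _ ?_ hnorm
  filter_upwards [self_mem_nhdsWithin] with z hz
  exact cos_mul_norm_cpow_le_re ha0.le (by linarith)
    (cayley_re_nonneg (mem_ball_zero_iff.mp hz).le)

lemma norm_Dh_expLensMap_le {a : ℝ} (ha0 : 0 ≤ a) (ha1 : a < 1) {z : ℂ} (hz : ‖z‖ < 1) :
    ‖Dh (expLensMap a) z‖ ≤
      a / Real.cos (a * (Real.pi / 2)) * ((cayleyPow a z).re / Real.sinh (cayleyPow a z).re) := by
  have hcos := cos_mul_pi_div_two_pos (by linarith) ha1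
  have hre := cos_mul_norm_cpow_le_re ha0 (by linarith) (cayley_re_nonneg hz.le)
  have hdisk : 1 - ‖z‖ ^ 2 ≤ ‖1 - z ^ 2‖ := by
    have h := norm_sub_norm_le (1 : ℂ) (z ^ 2)
    rwa [norm_one, norm_pow] at h
  rw [norm_Dh_expLensMap ha0 ha1.le hz]
  calc a * ((1 - ‖z‖ ^ 2) / ‖1 - z ^ 2‖) * ‖cayleyPow a z‖ / Real.sinh (cayleyPow a z).re
      ≤ a * 1 * ((cayleyPow a z).re / Real.cos (a * (Real.pi / 2))) /
          Real.sinh (cayleyPow a z).re := by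
        gcongr
        · exact Real.sinh_nonneg_iff.mpr ((mul_nonneg hcos.le (norm_nonneg _)).trans hre)
        · exact div_le_one_of_le₀ hdisk (norm_nonneg _)
        · exact (le_div_iff₀' hcos).mpr hre
    _ = _ := by ring

lemma tendsto_norm_Dh_expLensMap_one {a : ℝ} (ha0 : 0 < a) (ha1 : a < 1) :
    Tendsto (fun z => ‖Dh (expLensMap a) z‖) (𝓝[ball 0 1] 1) (𝓝 0) := by
  have hbound := (tendsto_div_sinh_atTop.comp (tendsto_re_cayleyPow_atTop ha0 ha1)).const_mul
    (a / Real.cos (a * (Real.pi / 2)))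
  rw [mul_zero] at hbound
  refine squeeze_zero' (Eventually.of_forall fun z => norm_nonneg _) ?_ hbound
  filter_upwards [self_mem_nhdsWithin] with z hz
  exact norm_Dh_expLensMap_le ha0.le ha1 (mem_ball_zero_iff.mp hz)

lemma tendsto_norm_Dh_expLensMap_of_ne_one {a : ℝ} (ha0 : 0 ≤ a) (ha1 : a < 1) {ζ : ℂ}
    (hζ : ‖ζ‖ = 1) (hζ1 : ζ ≠ 1) (hζ1' : ζ ≠ -1) :
    Tendsto (fun z => ‖Dh (expLensMap a) z‖) (𝓝[ball 0 1] ζ) (𝓝 0) := by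
  have hslit := cayley_mem_slitPlane hζ.le hζ1 hζ1'
  have hg := (hasDerivAt_cayleyPow a hζ1 hslit).continuousAt
  have hg0 : cayleyPow a ζ ≠ 0 := cpow_ne_zero_iff.mpr (Or.inl (slitPlane_ne_zero hslit))
  have hre : 0 < (cayleyPow a ζ).re :=
    (mul_pos (cos_mul_pi_div_two_pos (by linarith) ha1) (norm_pos_iff.mpr hg0)).trans_le
      (cos_mul_norm_cpow_le_re ha0 (by linarith) (cayley_re_nonneg hζ.le))
  have hsq : ‖1 - ζ ^ 2‖ ≠ 0 := norm_ne_zero_iff.mpr fun h => by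
    rcases mul_eq_zero.mp (show (1 - ζ) * (1 + ζ) = 0 by linear_combination h) with h | h
    exacts [hζ1 (by linear_combination -h), hζ1' (by linear_combination h)]
  have hF : ContinuousAt (fun z => a * ((1 - ‖z‖ ^ 2) / ‖1 - z ^ 2‖) * ‖cayleyPow a z‖ /
      Real.sinh (cayleyPow a z).re) ζ := by
    have hfactor : ContinuousAt (fun z : ℂ => (1 - ‖z‖ ^ 2) / ‖1 - z ^ 2‖) ζ :=
      ContinuousAt.div (by fun_prop) (by fun_prop) hsq
    have hsinh : ContinuousAt (fun z => Real.sinh (cayleyPow a z).re) ζ :=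
      Real.continuous_sinh.continuousAt.comp (continuous_re.continuousAt.comp hg)
    exact ((continuousAt_const.mul hfactor).mul hg.norm).div hsinh (Real.sinh_pos_iff.mpr hre).ne'
  have hlim := hF.tendsto.mono_left (nhdsWithin_le_nhds (s := ball 0 1))
  simp only [hζ, one_pow, sub_self, zero_div, mul_zero, zero_mul] at hlim
  refine hlim.congr' ?_
  filter_upwards [self_mem_nhdsWithin] with z hz
  exact (norm_Dh_expLensMap ha0 ha1.le (mem_ball_zero_iff.mp hz)).symm

end ExpLensMap

open ExpLensMap

theorem exp_lens_map_boundary_limit (a : ℝ) (ha : 0 < a) (ha1 : a < 1) :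
    let g : ℂ → ℂ := fun z => ((1 + z) / (1 - z)) ^ (a : ℂ)
    let φ : ℂ → ℂ := fun z => Complex.exp (-(g z))
    ∀ ζ : ℂ, ‖ζ‖ = 1 → ζ ≠ -1 →
      Tendsto (fun z => ‖Dh φ z‖) (𝓝[ball (0:ℂ) 1] ζ) (𝓝 0) := by
  intro g φ ζ hζ hζ1'
  rcases eq_or_ne ζ 1 with rfl | hζ1
  · exact tendsto_norm_Dh_expLensMap_one ha ha1
  · exact tendsto_norm_Dh_expLensMap_of_ne_one ha.le ha1 hζ hζ1 hζ1'
end
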